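/- Let u = x_{i_1}···x_{i_d} ∈ M_{n,d,t}, let a_j = n - i_{d-j+1} - (j-1)(t-1), and let r ≥ 1 be the smallest integer with a_r > r - 1. Then the expansion |M_{n,d,t} \ L_u| = Σ_{j=r}^{d} C(a_j, j) satisfies a_d > a_{d-1} > ... > a_r ≥ r, i.e., it is the (unique) binomial (Macaulay) expansion of |M_{n,d,t} \ L_u| with respect to d. In particular a_j - a_{j-1} ≥ 1 for all j and C(a_j, j) = 0 for j < r. -/

import Mathlib

open Finset

/-- The set of `t`-spread "monomials" of degree `d` in variables `x_1,...,x_n`,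
identified with `d`-element subsets of `{1,...,n}` with consecutive gaps `≥ t`. -/
def M (n d t : ℕ) : Finset (Finset ℕ) :=
  (Finset.powersetCard d (Finset.Icc 1 n)).filter
    (fun F => ∀ i ∈ F, ∀ j ∈ F, i < j → i + t ≤ j)

/-- The `τ`-shadow of a family `L ⊆ M n d t`. -/
def shad (τ n d : ℕ) (L : Finset (Finset ℕ)) : Finset (Finset ℕ) :=
  (M n (d + 1) τ).filter (fun G => ∃ F ∈ L, F ⊆ G)

/-- `F >_lex G` : the smallest element of the symmetric difference belongs to `F`. -/
def lexGT (F G : Finset ℕ) : Prop :=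
  ∃ k, k ∈ F ∧ k ∉ G ∧ ∀ j < k, (j ∈ F ↔ j ∈ G)

/-- `L` is a `t`-spread lex set in `M n d t` (a lex up-set). -/
def IsLexSet (n d t : ℕ) (L : Finset (Finset ℕ)) : Prop :=
  L ⊆ M n d t ∧ ∀ u ∈ L, ∀ v ∈ M n d t, lexGT v u → v ∈ L

/-- `L` is a `t`-spread strongly stable set in `M n d t`. -/
def IsSSS (n d t : ℕ) (L : Finset (Finset ℕ)) : Prop :=
  L ⊆ M n d t ∧ ∀ F ∈ L, ∀ j ∈ F, ∀ i < j, i ∉ F →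
    insert i (F.erase j) ∈ M n d t → insert i (F.erase j) ∈ L

/-- number of members of `L` with maximum element `= i`. -/
def mEq (i : ℕ) (L : Finset (Finset ℕ)) : ℕ :=
  (L.filter (fun F => i ∈ F ∧ ∀ j ∈ F, j ≤ i)).card

/-- number of members of `L` with maximum element `≤ i`. -/
def mLe (i : ℕ) (L : Finset (Finset ℕ)) : ℕ :=
  (L.filter (fun F => ∀ j ∈ F, j ≤ i)).card

/-!
If `v <_lex u`, let `c` be the least element where `v` and `u` differ: then `c ∈ u \ v`, `v` agrees
with `u` below `c`, and above `c` it is an arbitrary `t`-spread set of the remaining size. Shifting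
that upper part down by `c` identifies the `v` with a given `c = i_m` with `M_{n - i_m, d-m+1, t}`,
which has `C(a_{d-m+1}, d-m+1)` elements by the Pascal-type recursion obtained from splitting on
whether `1 ∈ F`. The `a_j` increase because `i_m + t ≤ i_{m+1}` along `u` and `i_d ≤ n`.
-/

def IsSpread (t : ℕ) (F : Finset ℕ) : Prop :=
  ∀ i ∈ F, ∀ j ∈ F, i < j → i + t ≤ j

lemma mem_M_iff {n d t : ℕ} {F : Finset ℕ} :
    F ∈ M n d t ↔ F ⊆ Icc 1 n ∧ #F = d ∧ IsSpread t F := by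
  simp [M, mem_powersetCard, and_assoc, IsSpread]

namespace IsSpread

variable {t : ℕ} {F G : Finset ℕ}

lemma of_le_one (ht : t ≤ 1) (F : Finset ℕ) : IsSpread t F :=
  fun _ _ _ _ hij => by omega

lemma mono (hG : IsSpread t G) (hFG : F ⊆ G) : IsSpread t F :=
  fun i hi j hj => hG i (hFG hi) j (hFG hj)

lemma union (hF : IsSpread t F) (hG : IsSpread t G) (hFG : ∀ x ∈ F, ∀ y ∈ G, x + t ≤ y) :
    IsSpread t (F ∪ G) := by
  intro i hi j hj hij
  rcases mem_union.1 hi with hi | hi <;> rcases mem_union.1 hj with hj | hj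
  · exact hF i hi j hj hij
  · exact hFG i hi j hj
  · have := hFG j hj i hi
    omega
  · exact hG i hi j hj hij

lemma image_add (hF : IsSpread t F) (c : ℕ) : IsSpread t (F.image (· + c)) := by
  simp only [IsSpread, mem_image]
  rintro _ ⟨i, hi, rfl⟩ _ ⟨j, hj, rfl⟩ hij
  have := hF i hi j hj (by omega)
  omega

lemma image_sub (hF : IsSpread t F) {c : ℕ} (hc : ∀ x ∈ F, c ≤ x) :
    IsSpread t (F.image (· - c)) := by
  simp only [IsSpread, mem_image]
  rintro _ ⟨i, hi, rfl⟩ _ ⟨j, hj, rfl⟩ hij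
  have := hF i hi j hj (by have := hc i hi; omega)
  have := hc i hi
  omega

end IsSpread

lemma M_spread_zero (n d : ℕ) : M n d 0 = M n d 1 := by
  ext F
  simp [mem_M_iff, IsSpread.of_le_one]

lemma image_add_subset_Ioc {w : Finset ℕ} {m : ℕ} (hw : w ⊆ Icc 1 m) (c : ℕ) :
    w.image (· + c) ⊆ Ioc c (m + c) := by
  intro y hy
  obtain ⟨x, hx, rfl⟩ := mem_image.1 hy
  have := mem_Icc.1 (hw hx)
  exact mem_Ioc.2 ⟨by omega, by omega⟩

lemma image_sub_add_cancel {c : ℕ} {U : Finset ℕ} (hU : ∀ x ∈ U, c ≤ x) :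
    (U.image (· - c)).image (· + c) = U := by
  rw [image_image]
  exact (image_congr fun x hx => Nat.sub_add_cancel (hU x hx)).trans image_id

/-- Shifting the part above `c` down by `c` is the bijection. -/
lemma card_filter_M_filter_le_eq {n d t c : ℕ} {P : Finset ℕ} (hP : P ∈ M n #P t) (hPd : #P ≤ d)
    (hPc : ∀ p ∈ P, p ≤ c) (hPt : ∀ p ∈ P, p + t ≤ c + 1) :
    #{v ∈ M n d t | v.filter (· ≤ c) = P} = #(M (n - c) (d - #P) t) := by
  obtain ⟨hPn, -, hPs⟩ := mem_M_iff.1 hP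
  have hsplit (v : Finset ℕ) : v.filter (· ≤ c) ∪ v.filter (c < ·) = v := by
    simpa only [not_le] using filter_union_filter_not_eq (· ≤ c) v
  refine card_nbij' (fun v => (v.filter (c < ·)).image (· - c))
    (fun w => P ∪ w.image (· + c)) (fun v hv => ?_) (fun w hw => ?_) (fun v hv => ?_) fun w hw => ?_
  · simp only [coe_filter, Set.mem_ofPred_eq, mem_M_iff] at hv
    obtain ⟨⟨hvn, hvd, hvs⟩, hvP⟩ := hv
    have hcard := card_union_of_disjoint (disjoint_filter_filter_not v v (· ≤ c))
    rw [filter_union_filter_not_eq, hvP] at hcard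
    simp only [not_le] at hcard
    refine mem_M_iff.2 ⟨fun y hy => ?_, ?_, (hvs.mono (filter_subset _ _)).image_sub
      fun x hx => (mem_filter.1 hx).2.le⟩
    · obtain ⟨x, hx, rfl⟩ := mem_image.1 hy
      have := mem_Icc.1 (hvn (mem_filter.1 hx).1)
      have := (mem_filter.1 hx).2
      exact mem_Icc.2 ⟨by omega, by omega⟩
    · rw [card_image_of_injOn fun x hx y hy hxy => ?_]
      · omega
      · simp only [coe_filter, Set.mem_ofPred_eq] at hx hy
        omega
  · obtain ⟨hwn, hwd, hws⟩ := mem_M_iff.1 hw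
    have hW := image_add_subset_Ioc hwn c
    have hPW : Disjoint P (w.image (· + c)) := disjoint_left.2 fun p hp hpW => by
      have := hPc p hp
      have := mem_Ioc.1 (hW hpW)
      omega
    simp only [coe_filter, Set.mem_ofPred_eq, mem_M_iff]
    refine ⟨⟨union_subset hPn fun y hy => ?_, ?_, hPs.union (hws.image_add c) fun p hp y hy => ?_⟩,
      ?_⟩
    · have := mem_Ioc.1 (hW hy)
      exact mem_Icc.2 ⟨by omega, by omega⟩
    · rw [card_union_of_disjoint hPW, card_image_of_injective _ (add_left_injective c)]
      omega
    · have := hPt p hp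
      have := mem_Ioc.1 (hW hy)
      omega
    · rw [filter_union, filter_true_of_mem hPc, filter_false_of_mem fun y hy => by
        have := mem_Ioc.1 (hW hy); omega, union_empty]
  · simp only [coe_filter, Set.mem_ofPred_eq] at hv
    simp only
    rw [image_sub_add_cancel fun x hx => (mem_filter.1 hx).2.le, ← hv.2, hsplit]
  · have hW := image_add_subset_Ioc (mem_M_iff.1 hw).1 c
    simp only
    rw [filter_union, filter_false_of_mem fun p hp => by have := hPc p hp; omega,
      filter_true_of_mem fun y hy => (mem_Ioc.1 (hW hy)).1, empty_union, image_image]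
    simp [Function.comp_def]

lemma M_degree_zero (n t : ℕ) : M n 0 t = {∅} := by
  ext F
  simp only [mem_M_iff, card_eq_zero, mem_singleton]
  constructor
  · exact fun h => h.2.1
  · rintro rfl
    simp [IsSpread]

lemma M_zero_variables (d t : ℕ) : M 0 (d + 1) t = ∅ := by
  ext F
  simp only [mem_M_iff, notMem_empty, iff_false, not_and]
  intro hF hcard
  simp [subset_empty.1 (by simpa using hF)] at hcard

lemma card_M_succ_succ {t : ℕ} (ht : 1 ≤ t) (n d : ℕ) :
    #(M (n + 1) (d + 1) t) = #(M n (d + 1) t) + #(M (n + 1 - t) d t) := by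
  -- split on `1 ∈ F`: such `F` meet `[0, t]` in `{1}`, the others meet `[0, 1]` in `∅`
  rw [← card_filter_add_card_filter_not (fun F => 1 ∉ F)]
  congr 1
  · rw [filter_congr (q := fun F => F.filter (· ≤ 1) = ∅) fun F hF => ?_]
    · simpa using card_filter_M_filter_le_eq (n := n + 1) (d := d + 1) (t := t) (c := 1)
        (P := ∅) (by simp [M_degree_zero]) (by simp) (by simp) (by simp)
    · have := (mem_M_iff.1 hF).1
      rw [filter_eq_empty_iff]
      refine ⟨fun h1 x hx hx1 => ?_, fun h h1 => h h1 le_rfl⟩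
      have := mem_Icc.1 (this hx)
      exact h1 (by rwa [show x = 1 by omega] at hx)
  · rw [filter_congr (q := fun F => F.filter (· ≤ t) = {1}) fun F hF => ?_]
    · simpa using card_filter_M_filter_le_eq (n := n + 1) (d := d + 1) (t := t) (c := t)
        (P := {1}) (by simp [mem_M_iff, IsSpread]) (by simp) (by simpa using ht)
        (by simp [add_comm])
    · obtain ⟨hFn, -, hFs⟩ := mem_M_iff.1 hF
      refine ⟨fun h1 => ?_, fun h => by
        simpa using mem_of_mem_filter 1 (h ▸ mem_singleton_self 1)⟩
      ext x
      simp only [mem_filter, mem_singleton]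
      refine ⟨fun ⟨hx, hxt⟩ => ?_, by rintro rfl; exact ⟨not_not.1 h1, ht⟩⟩
      have := mem_Icc.1 (hFn hx)
      by_contra hx1
      have := hFs 1 (not_not.1 h1) x hx (by omega)
      omega

lemma choose_sub_mul_succ (n d s : ℕ) :
    (n - d * s).choose (d + 1) + (n - s - (d - 1) * s).choose d =
      (n + 1 - d * s).choose (d + 1) := by
  rcases d with _ | d
  · simp
  · have : n - s - d * s = n - (d + 1) * s := by rw [add_one_mul, add_comm, Nat.sub_sub]
    rw [Nat.add_sub_cancel, this]
    rcases le_or_gt ((d + 1) * s) n with h | h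
    · rw [Nat.sub_add_comm h, Nat.choose_succ_succ', add_comm]
    · rw [Nat.sub_eq_zero_of_le h.le, Nat.sub_eq_zero_of_le h]
      simp

lemma card_M_of_pos {t : ℕ} (ht : 1 ≤ t) (n d : ℕ) :
    #(M n d t) = (n - (d - 1) * (t - 1)).choose d := by
  induction n using Nat.strong_induction_on generalizing d with
  | _ n ih =>
    rcases d with _ | d
    · simp [M_degree_zero]
    rcases n with _ | n
    · simp [M_zero_variables]
    rw [card_M_succ_succ ht, ih n (by omega), ih (n + 1 - t) (by omega),
      show n + 1 - t = n - (t - 1) by omega, Nat.add_sub_cancel, choose_sub_mul_succ]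

lemma card_M (n d t : ℕ) : #(M n d t) = (n - (d - 1) * (t - 1)).choose d := by
  obtain rfl | ht := Nat.eq_zero_or_pos t
  · rw [M_spread_zero, card_M_of_pos le_rfl]
  · exact card_M_of_pos ht n d

open Classical

lemma lexGT_irrefl (F : Finset ℕ) : ¬ lexGT F F :=
  fun ⟨_, hk, hk', _⟩ => hk' hk

lemma lexGT.asymm {F G : Finset ℕ} : lexGT F G → ¬ lexGT G F := by
  rintro ⟨k, hkF, hkG, hk⟩ ⟨l, hlG, hlF, hl⟩
  rcases lt_trichotomy k l with h | rfl | h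
  · exact hkG ((hl k h).2 hkF)
  · exact hkG hlG
  · exact hlF ((hk l h).2 hlG)

lemma not_eq_or_lexGT_iff {F G : Finset ℕ} : ¬ (G = F ∨ lexGT G F) ↔ lexGT F G := by
  refine ⟨fun h => ?_, fun h => ?_⟩
  · rw [not_or] at h
    have hex : ∃ k, ¬ (k ∈ F ↔ k ∈ G) := by
      by_contra! hFG
      exact h.1 (Finset.ext fun k => (hFG k).symm)
    have hmin : ∀ j < Nat.find hex, (j ∈ F ↔ j ∈ G) := fun j hj => not_not.1 (Nat.find_min hex hj)
    by_cases hF : Nat.find hex ∈ F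
    · exact ⟨_, hF, fun hG => Nat.find_spec hex (iff_of_true hF hG), hmin⟩
    · have hG : Nat.find hex ∈ G := by
        by_contra hG
        exact Nat.find_spec hex (iff_of_false hF hG)
      exact absurd ⟨_, hG, hF, fun j hj => (hmin j hj).symm⟩ h.2
  · rintro (rfl | h')
    exacts [lexGT_irrefl _ h, h.asymm h']

lemma filter_le_eq_filter_lt_iff {u v : Finset ℕ} {c : ℕ} :
    v.filter (· ≤ c) = u.filter (· < c) ↔ c ∉ v ∧ ∀ j < c, (j ∈ u ↔ j ∈ v) := by
  simp only [Finset.ext_iff, mem_filter]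
  refine ⟨fun h => ⟨fun hc => by simpa using (h c).1 ⟨hc, le_rfl⟩, fun j hj => ?_⟩,
    fun ⟨hc, h⟩ j => ?_⟩
  · simpa [hj, hj.le] using (h j).symm
  · rcases lt_or_ge j c with hj | hj
    · simp [hj, hj.le, h j hj]
    · simp only [not_lt.2 hj, and_false, iff_false, not_and]
      exact fun hjv hjc => hc (le_antisymm hjc hj ▸ hjv)

lemma lexGT_iff_exists_filter_le_eq {u v : Finset ℕ} :
    lexGT u v ↔ ∃ c ∈ u, v.filter (· ≤ c) = u.filter (· < c) := by
  simp only [filter_le_eq_filter_lt_iff, lexGT]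

lemma card_filter_lexGT {n d t : ℕ} {u : Finset ℕ} (hu : u ∈ M n d t) :
    #{v ∈ M n d t | lexGT u v} = ∑ c ∈ u, #(M (n - c) (d - #{x ∈ u | x < c}) t) := by
  obtain ⟨hun, rfl, hus⟩ := mem_M_iff.1 hu
  have hclasses : {v ∈ M n #u t | lexGT u v} =
      u.biUnion fun c => {v ∈ M n #u t | v.filter (· ≤ c) = u.filter (· < c)} := by
    ext v
    simp only [mem_filter, mem_biUnion, lexGT_iff_exists_filter_le_eq]
    tauto
  rw [hclasses, card_biUnion]
  · refine sum_congr rfl fun c hc => card_filter_M_filter_le_eq ?_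
      (card_le_card (filter_subset _ _)) (fun p hp => (mem_filter.1 hp).2.le) fun p hp => ?_
    · exact mem_M_iff.2 ⟨(filter_subset _ _).trans hun, rfl, hus.mono (filter_subset _ _)⟩
    · have := hus p (mem_filter.1 hp).1 c hc (mem_filter.1 hp).2
      omega
  · intro c hc c' hc' hne
    wlog h : c < c' generalizing c c'
    · exact (this hc' hc hne.symm (by omega)).symm
    refine disjoint_left.2 fun v hvc hvc' => ?_
    have hcv : c ∈ v.filter (· ≤ c') := by
      rw [(mem_filter.1 hvc').2]
      exact mem_filter.2 ⟨hc, h⟩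
    have : c ∈ u.filter (· < c) := by
      rw [← (mem_filter.1 hvc).2]
      exact mem_filter.2 ⟨(mem_filter.1 hcv).1, le_rfl⟩
    exact lt_irrefl c (mem_filter.1 this).2

section StrictMonoOnIcc

variable {n d t : ℕ} {i : ℕ → ℕ}

lemma card_filter_image_lt (hi : StrictMonoOn i (Set.Icc 1 d)) {m : ℕ} (hm : m ∈ Icc 1 d) :
    #{x ∈ (Icc 1 d).image i | x < i m} = m - 1 := by
  have : (Icc 1 d).filter (fun j => i j < i m) = Ico 1 m := by
    ext j
    simp only [mem_filter, mem_Icc, mem_Ico] at hm ⊢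
    constructor
    · rintro ⟨hj, hjm⟩
      exact ⟨hj.1, (hi.lt_iff_lt ⟨hj.1, hj.2⟩ ⟨hm.1, hm.2⟩).1 hjm⟩
    · rintro ⟨hj1, hjm⟩
      exact ⟨⟨hj1, by omega⟩, hi ⟨hj1, by omega⟩ ⟨hm.1, hm.2⟩ hjm⟩
  rw [filter_image, this, card_image_of_injOn (hi.injOn.mono ?_), Nat.card_Ico]
  intro j hj
  simp only [coe_Ico, Set.mem_Ico] at hj
  exact ⟨hj.1, by have := mem_Icc.1 hm; omega⟩

lemma IsSpread.strictMonoOn_add_sub_mul (hi : StrictMonoOn i (Set.Icc 1 d))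
    (hs : IsSpread t ((Icc 1 d).image i)) :
    StrictMonoOn (fun m => i m + (d - m) * (t - 1)) (Set.Icc 1 d) := by
  refine strictMonoOn_of_lt_succ Set.ordConnected_Icc fun m _ hm hm' => ?_
  simp only [Order.succ_eq_add_one, Set.mem_Icc] at hm hm' ⊢
  have hlt := hi ⟨hm.1, hm.2⟩ ⟨by omega, hm'.2⟩ (Nat.lt_succ_self m)
  have hgap := hs _ (mem_image_of_mem i (mem_Icc.2 hm)) _
    (mem_image_of_mem i (mem_Icc.2 ⟨by omega, hm'.2⟩)) hlt
  rw [show d - m = d - (m + 1) + 1 by omega, add_one_mul]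
  omega

lemma sub_sub_mul_lt_of_mem_M (hi : StrictMonoOn i (Set.Icc 1 d))
    (hu : (Icc 1 d).image i ∈ M n d t) {j : ℕ} (hj : 1 ≤ j) (hjd : j < d) :
    n - i (d - j + 1) - (j - 1) * (t - 1) < n - i (d - j) - j * (t - 1) := by
  obtain ⟨hun, -, hus⟩ := mem_M_iff.1 hu
  have hβ := hus.strictMonoOn_add_sub_mul hi
  have hlt := hβ (a := d - j) (b := d - j + 1) ⟨by omega, by omega⟩ ⟨by omega, by omega⟩ (by omega)
  have hle := hβ.monotoneOn (a := d - j + 1) (b := d) ⟨by omega, by omega⟩ ⟨by omega, le_rfl⟩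
    (by omega)
  have hdn := mem_Icc.1 (hun (mem_image_of_mem i (mem_Icc.2 ⟨by omega, le_rfl⟩)))
  simp only [Nat.sub_self, zero_mul, add_zero, show d - (d - j) = j by omega,
    show d - (d - j + 1) = j - 1 by omega] at hlt hle
  omega

lemma sum_Icc_one_reflect {β : Type*} [AddCommMonoid β] (f : ℕ → β) (d : ℕ) :
    ∑ m ∈ Icc 1 d, f (d - m + 1) = ∑ j ∈ Icc 1 d, f j :=
  sum_nbij' (fun m => d - m + 1) (fun j => d - j + 1)
    (fun m hm => by simp only [mem_Icc] at hm ⊢; omega)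
    (fun m hm => by simp only [mem_Icc] at hm ⊢; omega)
    (fun m hm => by simp only [mem_Icc] at hm ⊢; omega)
    (fun m hm => by simp only [mem_Icc] at hm ⊢; omega) fun _ _ => rfl

lemma card_filter_lexGT_image (hi : StrictMonoOn i (Set.Icc 1 d))
    (hu : (Icc 1 d).image i ∈ M n d t) :
    #{v ∈ M n d t | lexGT ((Icc 1 d).image i) v} =
      ∑ j ∈ Icc 1 d, (n - i (d - j + 1) - (j - 1) * (t - 1)).choose j := by
  rw [card_filter_lexGT hu, ← sum_Icc_one_reflect, sum_image (by rw [coe_Icc]; exact hi.injOn)]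
  refine sum_congr rfl fun m hm => ?_
  have := mem_Icc.1 hm
  rw [card_filter_image_lt hi hm, card_M, show d - (d - m + 1) + 1 = m by omega,
    show d - (m - 1) = d - m + 1 by omega, Nat.add_sub_cancel, Nat.sub_sub]

end StrictMonoOnIcc

theorem macaulay_expansion_of_Lu_general (n d t : ℕ)
    (i : ℕ → ℕ) (hi : ∀ j k, 1 ≤ j → j < k → k ≤ d → i j < i k)
    (u : Finset ℕ) (hu : u = (Finset.Icc 1 d).image i) (huM : u ∈ M n d t)
    (a : ℕ → ℕ) (ha : ∀ j, a j = n - i (d - j + 1) - (j - 1) * (t - 1))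
    (r : ℕ) (hr1 : 1 ≤ r)
    (hrmin : ∀ j, 1 ≤ j → j < r → a j ≤ j - 1) :
    (∀ j, r ≤ j → j < d → a j < a (j + 1)) ∧
    (∀ j, 1 ≤ j → j < r → Nat.choose (a j) j = 0) ∧
    (M n d t \ (M n d t).filter (fun v => v = u ∨ lexGT v u)).card =
      ∑ j ∈ Finset.Icc r d, Nat.choose (a j) j := by
  have hmono : StrictMonoOn i (Set.Icc 1 d) := fun j hj k hk hjk => hi j k hj.1 hjk hk.2
  subst hu
  have hvanish : ∀ j, 1 ≤ j → j < r → (a j).choose j = 0 := fun j hj hjr =>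
    Nat.choose_eq_zero_of_lt (by have := hrmin j hj hjr; omega)
  refine ⟨fun j hrj hjd => ?_, hvanish, ?_⟩
  · rw [ha, ha, show d - (j + 1) + 1 = d - j by omega, Nat.add_sub_cancel]
    exact sub_sub_mul_lt_of_mem_M hmono huM (by omega) hjd
  · rw [← filter_not, filter_congr fun v _ => not_eq_or_lexGT_iff,
      card_filter_lexGT_image hmono huM,
      sum_subset (Icc_subset_Icc_left hr1) fun j hj hjr => hvanish j (mem_Icc.1 hj).1 (by
        simp only [mem_Icc] at hj hjr; omega)]
    exact sum_congr rfl fun j _ => by rw [ha]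

/-- with `a_j = n - i_{d-j+1} - (j-1)(t-1)` and `r ≥ 1` smallest with
`a_r > r - 1`, the expansion `|M_{n,d,t} \ L_u| = Σ_{j=r}^d C(a_j, j)` is the binomial
(Macaulay) expansion with respect to `d`: the `a_j` are strictly increasing,
`a_r ≥ r`, and `C(a_j, j) = 0` for `j < r`. -/
theorem macaulay_expansion_of_Lu (n d t : ℕ) (ht : 1 ≤ t) (hd : 1 ≤ d)
    (i : ℕ → ℕ) (hi : ∀ j k, 1 ≤ j → j < k → k ≤ d → i j < i k)
    (u : Finset ℕ) (hu : u = (Finset.Icc 1 d).image i) (huM : u ∈ M n d t)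
    (a : ℕ → ℕ) (ha : ∀ j, a j = n - i (d - j + 1) - (j - 1) * (t - 1))
    (r : ℕ) (hr1 : 1 ≤ r) (hrd : r ≤ d) (hr : r ≤ a r)
    (hrmin : ∀ j, 1 ≤ j → j < r → a j ≤ j - 1) :
    (∀ j, r ≤ j → j < d → a j < a (j + 1)) ∧
    (∀ j, 1 ≤ j → j < r → Nat.choose (a j) j = 0) ∧
    (M n d t \ (M n d t).filter (fun v => v = u ∨ lexGT v u)).card =
      ∑ j ∈ Finset.Icc r d, Nat.choose (a j) j :=
  macaulay_expansion_of_Lu_general n d t i hi u hu huM a ha r hr1 hrmin
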